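/- arXiv:2201.11463 — 2 statements merged into one kernel-verified Lean document; each statement's English description precedes it below -/
import Mathlib

section
/- Let F : ℝ → ℝ be continuous and nondecreasing, let α ∈ (0,1), and let q* ∈ ℝ be the unique real number satisfying F(q*) = α (i.e., F(q*) = α, and F(x) = α implies x = q*). If q : [0,∞) → ℝ is differentiable and satisfies q'(t) = α − F(q(t)) for all t ≥ 0, then q(t) → q* as t → ∞. -/
/-!
The squared distance `V t = (q t - qstar)²` is a Lyapunov function: its derivative
`2 (q - qstar) (α - F q)` is never positive, because `F` is monotone with `qstar` as its only
`α`-level point. So `V` is antitone, and it suffices that `q` comes `ε`-close to `qstar` once.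
If it never did, the derivative of `V` would stay below a fixed `-δ < 0`, since
`F (qstar + ε) > α > F (qstar - ε)`, and `V ≥ 0` would decrease linearly to `-∞`.
-/

open Filter Set

lemma antitoneOn_Ici_of_hasDerivAt_nonpos {f f' : ℝ → ℝ} {a : ℝ}
    (hf : ∀ t ∈ Ici a, HasDerivAt f (f' t) t) (hf' : ∀ t ∈ Ici a, f' t ≤ 0) :
    AntitoneOn f (Ici a) :=
  antitoneOn_of_hasDerivWithinAt_nonpos (convex_Ici a)
    (fun t ht => (hf t ht).continuousAt.continuousWithinAt)
    (fun t ht => (hf t (interior_subset ht)).hasDerivWithinAt)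
    (fun t ht => hf' t (interior_subset ht))

lemma exists_neg_of_hasDerivAt_le_neg {f f' : ℝ → ℝ} {δ : ℝ} (hδ : 0 < δ)
    (hf : ∀ t ∈ Ici 0, HasDerivAt f (f' t) t) (hf' : ∀ t ∈ Ici 0, f' t ≤ -δ) :
    ∃ t ∈ Ici 0, f t < 0 := by
  have hanti : AntitoneOn (fun t => f t + δ * t) (Ici 0) :=
    antitoneOn_Ici_of_hasDerivAt_nonpos
      (fun t ht => by simpa using (hf t ht).fun_add ((hasDerivAt_id t).const_mul δ))
      (fun t ht => by linarith [hf' t ht])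
  have hT : (0 : ℝ) ≤ |f 0| / δ + 1 := by positivity
  refine ⟨|f 0| / δ + 1, hT, ?_⟩
  have h := hanti self_mem_Ici hT hT
  have hδT : δ * (|f 0| / δ + 1) = |f 0| + δ := by field_simp
  simp only [mul_zero, add_zero] at h
  linarith [le_abs_self (f 0)]

section Level

variable {F : ℝ → ℝ} {α x₀ : ℝ}

lemma lt_apply_of_lt_of_unique_level (hF : Monotone F) (hroot : F x₀ = α)
    (huniq : ∀ x, F x = α → x = x₀) {x : ℝ} (hx : x₀ < x) : α < F x :=
  (hroot ▸ hF hx.le).lt_of_ne fun h => hx.ne' (huniq x h.symm)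

lemma apply_lt_of_lt_of_unique_level (hF : Monotone F) (hroot : F x₀ = α)
    (huniq : ∀ x, F x = α → x = x₀) {x : ℝ} (hx : x < x₀) : F x < α :=
  (hroot ▸ hF hx.le).lt_of_ne fun h => hx.ne (huniq x h)

lemma sub_mul_sub_apply_nonpos (hF : Monotone F) (hroot : F x₀ = α) (x : ℝ) :
    (x - x₀) * (α - F x) ≤ 0 := by
  rcases le_total x x₀ with hx | hx
  · exact mul_nonpos_of_nonpos_of_nonneg (by linarith) (by linarith [hroot ▸ hF hx])
  · exact mul_nonpos_of_nonneg_of_nonpos (by linarith) (by linarith [hroot ▸ hF hx])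

lemma exists_pos_sub_mul_sub_apply_le_neg (hF : Monotone F) (hroot : F x₀ = α)
    (huniq : ∀ x, F x = α → x = x₀) {r : ℝ} (hr : 0 < r) :
    ∃ δ > 0, ∀ x, r ≤ |x - x₀| → (x - x₀) * (α - F x) ≤ -δ := by
  have hup := lt_apply_of_lt_of_unique_level hF hroot huniq (lt_add_of_pos_right x₀ hr)
  have hlow := apply_lt_of_lt_of_unique_level hF hroot huniq (sub_lt_self x₀ hr)
  refine ⟨r * min (F (x₀ + r) - α) (α - F (x₀ - r)),
    mul_pos hr (lt_min (by linarith) (by linarith)), fun x hx => ?_⟩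
  rcases le_abs'.mp hx with hx | hx
  · have hFx := hF (show x ≤ x₀ - r by linarith)
    nlinarith [min_le_right (F (x₀ + r) - α) (α - F (x₀ - r))]
  · have hFx := hF (show x₀ + r ≤ x by linarith)
    nlinarith [min_le_left (F (x₀ + r) - α) (α - F (x₀ - r))]

end Level

theorem stmt_1_general (F : ℝ → ℝ) (hFm : Monotone F)
    (α : ℝ)
    (qstar : ℝ) (hroot : F qstar = α) (huniq : ∀ x : ℝ, F x = α → x = qstar)
    (q : ℝ → ℝ) (hq : ∀ t : ℝ, 0 ≤ t → HasDerivAt q (α - F (q t)) t) :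
    Tendsto q atTop (nhds qstar) := by
  have hV : ∀ t ∈ Ici (0 : ℝ), HasDerivAt (fun t => (q t - qstar) ^ 2)
      (2 * ((q t - qstar) * (α - F (q t)))) t := fun t ht => by
    simpa [mul_assoc] using ((hq t ht).sub_const qstar).fun_pow 2
  have hVanti := antitoneOn_Ici_of_hasDerivAt_nonpos hV fun t _ => by
    linarith [sub_mul_sub_apply_nonpos hFm hroot (q t)]
  rw [Metric.tendsto_atTop]
  intro ε hε
  obtain ⟨T, hT, hTε⟩ : ∃ T ∈ Ici (0 : ℝ), |q T - qstar| < ε := by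
    by_contra! hfar
    obtain ⟨δ, hδ, hδq⟩ := exists_pos_sub_mul_sub_apply_le_neg hFm hroot huniq hε
    obtain ⟨t, -, ht⟩ := exists_neg_of_hasDerivAt_le_neg (mul_pos two_pos hδ) hV
      fun t ht => by linarith [hδq (q t) (hfar t ht)]
    exact (sq_nonneg _).not_gt ht
  refine ⟨T, fun t ht => ?_⟩
  have hVt := hVanti hT (mem_Ici.mpr (le_trans hT ht)) ht
  rw [Real.dist_eq]
  exact (sq_le_sq.mp hVt).trans_lt hTε

/-- Global asymptotic stability in Lemma 1 of the paper: if `F` is continuous and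
nondecreasing, `α ∈ (0,1)`, `qstar` is the unique root of `F x = α`, and
`q : [0,∞) → ℝ` solves the ODE `q'(t) = α − F (q t)`, then `q t → qstar` as `t → ∞`. -/
theorem stmt_1 (F : ℝ → ℝ) (hFc : Continuous F) (hFm : Monotone F)
    (α : ℝ) (hα : α ∈ Set.Ioo (0 : ℝ) 1)
    (qstar : ℝ) (hroot : F qstar = α) (huniq : ∀ x : ℝ, F x = α → x = qstar)
    (q : ℝ → ℝ) (hq : ∀ t : ℝ, 0 ≤ t → HasDerivAt q (α - F (q t)) t) :
    Tendsto q atTop (nhds qstar) :=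
  stmt_1_general F hFm α qstar hroot huniq q hq
end

section
/- Let (Ω, 𝓕, P) be a probability space with a filtration (𝓕_k)_{k∈ℕ}, let α ∈ (0,1), and let q⁻ ≤ q⁺ be real constants. Let (β_k) be positive reals with Σ_{k=0}^{∞} β_k² < ∞. Let (q_k) be real random variables with q_k 𝓕_k-measurable, let (H_k) be random variables with values in [0,1] with H_k 𝓕_k-measurable, and let (δ_k) be a martingale-difference sequence relative to (𝓕_k) (δ_k is 𝓕_{k+1}-measurable, E[δ_k | 𝓕_k] = 0 a.s.) with |δ_k| ≤ 2 almost surely. Suppose that for every k: q_{k+1} = q_k + β_k(α − H_k) + β_k δ_k, and almost surely H_k ≥ α on the event {q_k ≥ q⁺} and H_k ≤ α on the event {q_k ≤ q⁻}. Then sup_k |q_k| < ∞ almost surely. -/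
/-!
Subtracting the noise martingale `M n = ∑_{k<n} β k δ k` turns the recursion into a pure drift
recursion whose steps are bounded, nonpositive above `qplus + sup |M|` and nonnegative below
`qminus - sup |M|`; such a sequence stays bounded. The increments of `M` are orthogonal in `L²`,
so `E[M n ^ 2] = ∑_{k<n} E[(β k δ k) ^ 2] ≤ 4 ∑ β k ^ 2`; thus `M` is an `L¹`-bounded martingale,
converges almost surely, and is almost surely bounded.
-/

open MeasureTheory Filter Topology Finset

lemma le_max_of_increment_nonpos_above {r d : ℕ → ℝ} {a c : ℝ}
    (hr : ∀ n, r (n + 1) = r n + d n) (hc : ∀ n, d n ≤ c) (hd : ∀ n, a < r n → d n ≤ 0) :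
    ∀ n, r n ≤ max (r 0) (a + c)
  | 0 => le_max_left _ _
  | n + 1 => by
    rw [hr n]
    rcases le_or_gt (r n) a with h | h
    · exact le_max_of_le_right (by linarith [hc n])
    · linarith [hd n h, le_max_of_increment_nonpos_above hr hc hd n]

lemma le_of_drift_nonpos_above {x d M : ℕ → ℝ} {b c B : ℝ}
    (hx : ∀ n, x (n + 1) = x n + d n + (M (n + 1) - M n)) (hc : ∀ n, d n ≤ c)
    (hM : ∀ n, |M n| ≤ B) (hd : ∀ n, b ≤ x n → d n ≤ 0) (n : ℕ) :
    x n ≤ max (x 0 - M 0) (b + B + c) + B := by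
  have hr : ∀ n, x (n + 1) - M (n + 1) = (x n - M n) + d n := fun n => by rw [hx n]; ring
  have hdr : ∀ n, b + B < x n - M n → d n ≤ 0 := fun n h =>
    hd n (by linarith [(abs_le.1 (hM n)).1])
  linarith [le_max_of_increment_nonpos_above hr hc hdr n, (abs_le.1 (hM n)).2]

lemma exists_abs_le_of_drift_toward_interval {x d M : ℕ → ℝ} {a b c B : ℝ}
    (hx : ∀ n, x (n + 1) = x n + d n + (M (n + 1) - M n)) (hc : ∀ n, |d n| ≤ c)
    (hM : ∀ n, |M n| ≤ B) (hd : ∀ n, (b ≤ x n → d n ≤ 0) ∧ (x n ≤ a → 0 ≤ d n)) :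
    ∃ C, ∀ n, |x n| ≤ C := by
  have upper := le_of_drift_nonpos_above hx (fun n => (abs_le.1 (hc n)).2) hM (fun n => (hd n).1)
  have lower := le_of_drift_nonpos_above (x := -x) (d := -d) (M := -M) (b := -a)
    (fun n => by simp only [Pi.neg_apply, hx n]; ring)
    (fun n => by simpa using neg_le.1 (abs_le.1 (hc n)).1)
    (fun n => by simpa using hM n)
    (fun n h => neg_nonpos.2 ((hd n).2 (by simpa using h)))
  refine ⟨max (max (x 0 - M 0) (b + B + c) + B) (max (-x 0 + M 0) (-a + B + c) + B),
    fun n => abs_le.2 ⟨?_, (upper n).trans (le_max_left _ _)⟩⟩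
  have := lower n
  simp only [Pi.neg_apply, sub_neg_eq_add] at this
  linarith [le_max_right (max (x 0 - M 0) (b + B + c) + B) (max (-x 0 + M 0) (-a + B + c) + B)]

section MartingaleDifference

variable {Ω : Type*} {m0 : MeasurableSpace Ω} {μ : Measure Ω} {ℱ : Filtration ℕ m0}
  {ξ : ℕ → Ω → ℝ}

lemma integral_mul_eq_zero_of_condExp_eq_zero {m : MeasurableSpace Ω} (hm : m ≤ m0)
    [SigmaFinite (μ.trim hm)] {f g : Ω → ℝ} (hf : StronglyMeasurable[m] f)
    (hfg : Integrable (f * g) μ) (hg : Integrable g μ) (hcond : μ[g | m] =ᵐ[μ] 0) :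
    ∫ ω, f ω * g ω ∂μ = 0 := by
  change ∫ ω, (f * g) ω ∂μ = 0
  rw [← integral_condExp hm]
  refine integral_eq_zero_of_ae ?_
  filter_upwards [condExp_mul_of_stronglyMeasurable_left hf hfg hg, hcond] with ω h1 h2
  simp [h1, h2]

lemma stronglyAdapted_sum_range (hmeas : ∀ k, StronglyMeasurable[ℱ (k + 1)] (ξ k)) :
    StronglyAdapted ℱ fun n => ∑ k ∈ range n, ξ k := fun _ =>
  Finset.stronglyMeasurable_sum _ fun k hk =>
    (hmeas k).mono (ℱ.mono (Finset.mem_range.1 hk))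

lemma martingale_sum_range [IsFiniteMeasure μ]
    (hmeas : ∀ k, StronglyMeasurable[ℱ (k + 1)] (ξ k)) (hint : ∀ k, Integrable (ξ k) μ)
    (hcond : ∀ k, μ[ξ k | ℱ k] =ᵐ[μ] 0) :
    Martingale (fun n => ∑ k ∈ range n, ξ k) ℱ μ :=
  martingale_of_condExp_sub_eq_zero_nat (stronglyAdapted_sum_range hmeas)
    (fun n => integrable_finsetSum' _ fun k _ => hint k)
    (fun n => by simpa only [sum_range_succ_sub_sum] using hcond n)

lemma integral_sq_sum_range [IsFiniteMeasure μ]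
    (hmeas : ∀ k, StronglyMeasurable[ℱ (k + 1)] (ξ k)) (hL2 : ∀ k, MemLp (ξ k) 2 μ)
    (hcond : ∀ k, μ[ξ k | ℱ k] =ᵐ[μ] 0) (n : ℕ) :
    ∫ ω, (∑ k ∈ range n, ξ k) ω ^ 2 ∂μ = ∑ k ∈ range n, ∫ ω, ξ k ω ^ 2 ∂μ := by
  induction n with
  | zero => simp
  | succ n ih =>
    set S := ∑ k ∈ range n, ξ k
    have hS : MemLp S 2 μ := memLp_finsetSum' _ fun k _ => hL2 k
    have hSξ : Integrable (fun ω => S ω * ξ n ω) μ := hS.integrable_mul (hL2 n)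
    have horth : ∫ ω, S ω * ξ n ω ∂μ = 0 :=
      integral_mul_eq_zero_of_condExp_eq_zero (ℱ.le n) (stronglyAdapted_sum_range hmeas n)
        hSξ ((hL2 n).integrable one_le_two) (hcond n)
    have hexpand : ∀ ω, (∑ k ∈ range (n + 1), ξ k) ω ^ 2
        = S ω ^ 2 + 2 * (S ω * ξ n ω) + ξ n ω ^ 2 := fun ω => by
      rw [sum_range_succ, Pi.add_apply]; ring
    have hint : Integrable (fun ω => S ω ^ 2 + 2 * (S ω * ξ n ω)) μ :=
      hS.integrable_sq.add (hSξ.const_mul 2)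
    simp_rw [hexpand]
    rw [integral_add hint (hL2 n).integrable_sq,
      integral_add hS.integrable_sq (hSξ.const_mul 2), integral_const_mul, horth, ih,
      sum_range_succ]
    ring

lemma eLpNorm_one_le_of_integral_sq_le [IsFiniteMeasure μ] {f : Ω → ℝ} (hf : MemLp f 2 μ)
    {C : ℝ} (hC : ∫ ω, f ω ^ 2 ∂μ ≤ C) :
    eLpNorm f 1 μ ≤ ENNReal.ofReal (μ.real Set.univ + C) := by
  have hint : Integrable f μ := hf.integrable one_le_two
  rw [eLpNorm_one_eq_lintegral_enorm, ← ofReal_integral_norm_eq_lintegral_enorm hint]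
  refine ENNReal.ofReal_le_ofReal ?_
  calc ∫ ω, ‖f ω‖ ∂μ ≤ ∫ ω, (1 + f ω ^ 2) ∂μ :=
        integral_mono hint.norm ((integrable_const 1).add hf.integrable_sq) fun ω => by
          nlinarith [Real.norm_eq_abs (f ω), sq_abs (f ω), sq_nonneg (|f ω| - 1)]
    _ ≤ μ.real Set.univ + C := by
        rw [integral_add (integrable_const 1) hf.integrable_sq]
        simp only [integral_const, smul_eq_mul, mul_one]
        linarith

lemma ae_tendsto_sum_range_of_summable_integral_sq [IsFiniteMeasure μ]
    (hmeas : ∀ k, StronglyMeasurable[ℱ (k + 1)] (ξ k)) (hL2 : ∀ k, MemLp (ξ k) 2 μ)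
    (hcond : ∀ k, μ[ξ k | ℱ k] =ᵐ[μ] 0) (hsum : Summable fun k => ∫ ω, ξ k ω ^ 2 ∂μ) :
    ∀ᵐ ω ∂μ, ∃ c, Tendsto (fun n => ∑ k ∈ range n, ξ k ω) atTop (𝓝 c) := by
  have hmart := martingale_sum_range hmeas (fun k => (hL2 k).integrable one_le_two) hcond
  have hbdd : ∀ n, eLpNorm (∑ k ∈ range n, ξ k) 1 μ
      ≤ (ENNReal.ofReal (μ.real Set.univ + ∑' k, ∫ ω, ξ k ω ^ 2 ∂μ)).toNNReal := by
    intro n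
    rw [ENNReal.coe_toNNReal ENNReal.ofReal_ne_top]
    refine eLpNorm_one_le_of_integral_sq_le (memLp_finsetSum' _ fun k _ => hL2 k) ?_
    rw [integral_sq_sum_range hmeas hL2 hcond n]
    exact hsum.sum_le_tsum _ fun k _ => integral_nonneg fun ω => sq_nonneg _
  filter_upwards [hmart.submartingale.ae_tendsto_limitProcess hbdd] with ω hω
  exact ⟨_, by simpa only [Finset.sum_apply] using hω⟩

lemma ae_tendsto_sum_range_mul_of_abs_le [IsFiniteMeasure μ] {β : ℕ → ℝ} {δ : ℕ → Ω → ℝ}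
    {C : ℝ} (hmeas : ∀ k, StronglyMeasurable[ℱ (k + 1)] (δ k))
    (hcond : ∀ k, μ[δ k | ℱ k] =ᵐ[μ] 0) (hbdd : ∀ k, ∀ᵐ ω ∂μ, |δ k ω| ≤ C)
    (hβ : Summable fun k => β k ^ 2) :
    ∀ᵐ ω ∂μ, ∃ c, Tendsto (fun n => ∑ k ∈ range n, β k * δ k ω) atTop (𝓝 c) := by
  have hξmeas : ∀ k, StronglyMeasurable[ℱ (k + 1)] (β k • δ k) := fun k =>
    (hmeas k).const_smul _
  have hξbdd : ∀ k, ∀ᵐ ω ∂μ, |(β k • δ k) ω| ≤ |β k| * C := fun k => by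
    filter_upwards [hbdd k] with ω hω
    rw [Pi.smul_apply, smul_eq_mul, abs_mul]
    exact mul_le_mul_of_nonneg_left hω (abs_nonneg _)
  have hξL2 : ∀ k, MemLp (β k • δ k) 2 μ := fun k =>
    (MemLp.of_bound ((hξmeas k).mono (ℱ.le _)).aestronglyMeasurable _ (hξbdd k)).mono_exponent
      le_top
  have hξcond : ∀ k, μ[β k • δ k | ℱ k] =ᵐ[μ] 0 := fun k => by
    filter_upwards [condExp_smul (β k) (δ k) (ℱ k), hcond k] with ω h1 h2
    simp only [h1, Pi.smul_apply, h2, Pi.zero_apply, smul_zero]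
  have hξsq : ∀ k, ∫ ω, (β k • δ k) ω ^ 2 ∂μ ≤ μ.real Set.univ * C ^ 2 * β k ^ 2 := fun k => by
    calc ∫ ω, (β k • δ k) ω ^ 2 ∂μ ≤ ∫ _, (|β k| * C) ^ 2 ∂μ := by
          refine integral_mono_ae (hξL2 k).integrable_sq (integrable_const _) ?_
          filter_upwards [hξbdd k] with ω hω
          exact sq_le_sq' (abs_le.1 hω).1 (abs_le.1 hω).2
      _ = μ.real Set.univ * C ^ 2 * β k ^ 2 := by
          rw [integral_const, smul_eq_mul, mul_pow, sq_abs]; ring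
  have hsum : Summable fun k => ∫ ω, (β k • δ k) ω ^ 2 ∂μ :=
    (hβ.mul_left _).of_nonneg_of_le (fun k => integral_nonneg fun ω => sq_nonneg _) hξsq
  simpa only [Pi.smul_apply, smul_eq_mul] using
    ae_tendsto_sum_range_of_summable_integral_sq hξmeas hξL2 hξcond hsum

end MartingaleDifference

theorem stmt_6_general {Ω : Type*} {m0 : MeasurableSpace Ω} (μ : Measure Ω) [IsProbabilityMeasure μ]
    (ℱ : Filtration ℕ m0) (α : ℝ) (hα : α ∈ Set.Ioo (0 : ℝ) 1)
    (qminus qplus : ℝ)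
    (β : ℕ → ℝ) (hβpos : ∀ k, 0 < β k) (hβ : Summable fun k => (β k) ^ 2)
    (q : ℕ → Ω → ℝ)
    (H : ℕ → Ω → ℝ) (hHrange : ∀ k ω, H k ω ∈ Set.Icc (0 : ℝ) 1)
    (δ : ℕ → Ω → ℝ) (hδmeas : ∀ k, StronglyMeasurable[ℱ (k + 1)] (δ k))
    (hδcond : ∀ k, μ[δ k | ℱ k] =ᵐ[μ] 0)
    (hδbdd : ∀ k, ∀ᵐ ω ∂μ, |δ k ω| ≤ 2)
    (hrec : ∀ k ω, q (k + 1) ω = q k ω + β k * (α - H k ω) + β k * δ k ω)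
    (hdrift : ∀ k, ∀ᵐ ω ∂μ,
      (qplus ≤ q k ω → α ≤ H k ω) ∧ (q k ω ≤ qminus → H k ω ≤ α)) :
    ∀ᵐ ω ∂μ, ∃ C : ℝ, ∀ k, |q k ω| ≤ C := by
  have hstep : ∀ k ω, |β k * (α - H k ω)| ≤ 1 + ∑' j, β j ^ 2 := fun k ω => by
    have hαH : |α - H k ω| ≤ 1 := abs_sub_le_iff.2
      ⟨by linarith [hα.2, (hHrange k ω).1], by linarith [hα.1, (hHrange k ω).2]⟩
    have hβS : β k ^ 2 ≤ ∑' j, β j ^ 2 := hβ.le_tsum k fun j _ => sq_nonneg _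
    rw [abs_mul, abs_of_pos (hβpos k)]
    nlinarith [hβpos k, sq_nonneg (β k - 1)]
  filter_upwards [ae_tendsto_sum_range_mul_of_abs_le hδmeas hδcond hδbdd hβ,
    ae_all_iff.2 hdrift] with ω ⟨c, hc⟩ hω
  obtain ⟨B, hB⟩ := hc.abs.bddAbove_range
  refine exists_abs_le_of_drift_toward_interval (a := qminus) (b := qplus)
    (d := fun k => β k * (α - H k ω))
    (fun n => by rw [sum_range_succ_sub_sum, hrec n ω]) (hstep · ω)
    (fun n => hB (Set.mem_range_self n)) fun n => ⟨fun h => ?_, fun h => ?_⟩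
  · exact mul_nonpos_of_nonneg_of_nonpos (hβpos n).le (by linarith [(hω n).1 h])
  · exact mul_nonneg (hβpos n).le (by linarith [(hω n).2 h])

/-- Lemma 3 of the paper: almost-sure boundedness of the quantile-tracking recursion
`q_{k+1} = q_k + β_k (α − H_k) + β_k δ_k`, where `H_k ∈ [0,1]` is the conditional CDF
evaluated at `q_k` (so `H_k ≥ α` when `q_k ≥ q⁺` and `H_k ≤ α` when `q_k ≤ q⁻`),
`δ` is a bounded martingale-difference noise, and `∑ β_k² < ∞`. -/
theorem stmt_6 {Ω : Type*} {m0 : MeasurableSpace Ω} (μ : Measure Ω) [IsProbabilityMeasure μ]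
    (ℱ : Filtration ℕ m0) (α : ℝ) (hα : α ∈ Set.Ioo (0 : ℝ) 1)
    (qminus qplus : ℝ) (hqq : qminus ≤ qplus)
    (β : ℕ → ℝ) (hβpos : ∀ k, 0 < β k) (hβ : Summable fun k => (β k) ^ 2)
    (q : ℕ → Ω → ℝ) (hqmeas : ∀ k, StronglyMeasurable[ℱ k] (q k))
    (H : ℕ → Ω → ℝ) (hHrange : ∀ k ω, H k ω ∈ Set.Icc (0 : ℝ) 1)
    (hHmeas : ∀ k, StronglyMeasurable[ℱ k] (H k))
    (δ : ℕ → Ω → ℝ) (hδmeas : ∀ k, StronglyMeasurable[ℱ (k + 1)] (δ k))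
    (hδcond : ∀ k, μ[δ k | ℱ k] =ᵐ[μ] 0)
    (hδbdd : ∀ k, ∀ᵐ ω ∂μ, |δ k ω| ≤ 2)
    (hrec : ∀ k ω, q (k + 1) ω = q k ω + β k * (α - H k ω) + β k * δ k ω)
    (hdrift : ∀ k, ∀ᵐ ω ∂μ,
      (qplus ≤ q k ω → α ≤ H k ω) ∧ (q k ω ≤ qminus → H k ω ≤ α)) :
    ∀ᵐ ω ∂μ, ∃ C : ℝ, ∀ k, |q k ω| ≤ C :=
  stmt_6_general μ ℱ α hα qminus qplus β hβpos hβ q H hHrange δ hδmeas hδcond hδbdd hrec hdrift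
end
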